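/- arXiv:2201.12531 — 4 statements merged into one kernel-verified Lean document; each statement's English description precedes it below -/
import Mathlib

section
/- Let G be a connected bipartite graph with colour classes V and E, let f be a hypertree of G, and let E' ⊆ E be nonempty. Then the sum of f(e) over e ∈ E' is at most μ(E') = |⋃E'| − c(E'), where ⋃E' is the set of vertices of V adjacent to some element of E', and c(E') is the number of connected components of the subgraph G|_{E'} induced by E', the edges incident to E', and their endpoints in V. -/
open SimpleGraph

variable {V E : Type*}

/-- The bipartite graph on `V ⊕ E` determined by the incidence relation `r`. -/
def BipGraph (r : V → E → Prop) : SimpleGraph (V ⊕ E) where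
  Adj x y := (∃ v e, x = Sum.inl v ∧ y = Sum.inr e ∧ r v e) ∨
             (∃ v e, x = Sum.inr e ∧ y = Sum.inl v ∧ r v e)
  symm := by
    constructor
    rintro x y (⟨v, e, rfl, rfl, h⟩ | ⟨v, e, rfl, rfl, h⟩)
    · exact Or.inr ⟨v, e, rfl, rfl, h⟩
    · exact Or.inl ⟨v, e, rfl, rfl, h⟩
  loopless := by
    constructor
    rintro x (⟨v, e, rfl, h, _⟩ | ⟨v, e, rfl, h, _⟩) <;> simp_all

/-- `τ` is a spanning tree of `G`. -/
def IsSpanningTree {α : Type*} (G τ : SimpleGraph α) : Prop :=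
  τ ≤ G ∧ τ.Connected ∧ τ.IsAcyclic

/-- A hypertree of the hypergraph induced by the bipartite graph `BipGraph r`
(with `E` the set of hyperedges): a function realized by a spanning tree. -/
def IsHypertree (r : V → E → Prop) (f : E → ℕ) : Prop :=
  ∃ τ : SimpleGraph (V ⊕ E), IsSpanningTree (BipGraph r) τ ∧
    ∀ e : E, (τ.neighborSet (Sum.inr e)).ncard = f e + 1

/-- The restriction of a graph `H` on `V ⊕ E` (typically a subgraph of `BipGraph r`)
to the hyperedge set `A` together with all `V`-vertices incident (in `G`) to `A`. -/
def BipRestrict (r : V → E → Prop) (H : SimpleGraph (V ⊕ E)) (A : Set E) :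
    SimpleGraph ({v : V // ∃ e ∈ A, r v e} ⊕ A) where
  Adj x y := H.Adj (Sum.elim (fun v => Sum.inl v.1) (fun e => Sum.inr e.1) x)
               (Sum.elim (fun v => Sum.inl v.1) (fun e => Sum.inr e.1) y)
  symm := ⟨fun _ _ h => H.adj_symm h⟩
  loopless := by
    constructor
    rintro (v | e) h <;> exact H.irrefl h

/-- `μ(A) = |⋃A| - c(A)`. -/
noncomputable def mu (r : V → E → Prop) (A : Set E) : ℕ :=
  Nat.card {v : V // ∃ e ∈ A, r v e} -
    Nat.card (BipRestrict r (BipGraph r) A).ConnectedComponent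

/-- `A` is tight at `f`. -/
noncomputable def Tight (r : V → E → Prop) (f : E → ℕ) (A : Finset E) : Prop :=
  ∑ e ∈ A, f e = mu r (↑A : Set E)

open Classical in
/-- The function obtained from `f` by decreasing `f e` by one and increasing `f e'` by one. -/
noncomputable def Transfer (f : E → ℕ) (e e' : E) : E → ℕ :=
  fun x => if x = e then f e - 1 else if x = e' then f e' + 1 else f x

/-- The internal inactivity of `f`: the number of internally inactive hyperedges. -/
noncomputable def intInact (r : V → E → Prop) [LT E] (f : E → ℕ) : ℕ :=
  Nat.card {e : E // ∃ e', e' < e ∧ IsHypertree r (Transfer f e e')}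

/-- The external inactivity of `f`: the number of externally inactive hyperedges. -/
noncomputable def extInact (r : V → E → Prop) [LT E] (f : E → ℕ) : ℕ :=
  Nat.card {e : E // ∃ e', e' < e ∧ IsHypertree r (Transfer f e' e)}

/-- The interior polynomial `I_G(x) = ∑_f x^{ῑ(f)}`. -/
noncomputable def interiorPoly (r : V → E → Prop) [Fintype E] [LT E] : Polynomial ℤ :=
  ∑ i ∈ Finset.range (Fintype.card E + 1),
    Polynomial.C ((Nat.card {f : E → ℕ // IsHypertree r f ∧ intInact r f = i} : ℕ) : ℤ) *
      Polynomial.X ^ i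

/-- The exterior polynomial `X_G(y) = ∑_f y^{ε̄(f)}`. -/
noncomputable def exteriorPoly (r : V → E → Prop) [Fintype E] [LT E] : Polynomial ℤ :=
  ∑ i ∈ Finset.range (Fintype.card E + 1),
    Polynomial.C ((Nat.card {f : E → ℕ // IsHypertree r f ∧ extInact r f = i} : ℕ) : ℤ) *
      Polynomial.X ^ i

/-!
Restricting the spanning tree `τ` to `E'` and its neighbourhood `⋃E'` gives a forest `T` inside
`G|_{E'}` in which every `e ∈ E'` keeps all of its `f e + 1` tree edges, so `T` has
`∑_{e ∈ E'} (f e + 1)` edges. A forest satisfies `#edges + #components ≤ #vertices`, and the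
spanning subgraph `T` has at least `c(E')` components; hence
`∑_{e ∈ E'} f e + |E'| + c(E') ≤ |⋃E'| + |E'|`.
-/

namespace SimpleGraph

variable {α : Type*} {G : SimpleGraph α}

lemma card_connectedComponent_lt_deleteEdges_of_isBridge [Finite α] {u v : α} (hadj : G.Adj u v)
    (hbr : G.IsBridge s(u, v)) :
    Nat.card G.ConnectedComponent < Nat.card (G.deleteEdges {s(u, v)}).ConnectedComponent := by
  have hle : G.deleteEdges {s(u, v)} ≤ G := G.deleteEdges_le _
  set φ := ConnectedComponent.map (Hom.ofLE hle)
  have hnotinj : ¬ Function.Injective φ := fun hinj =>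
    isBridge_iff.mp hbr <| ConnectedComponent.exact <|
      hinj (ConnectedComponent.sound hadj.reachable)
  have := Fintype.ofFinite α
  classical
  simpa only [Nat.card_eq_fintype_card] using
    Fintype.card_lt_of_surjective_not_injective φ (ConnectedComponent.surjective_map_ofLE hle)
      hnotinj

lemma IsAcyclic.card_edgeSet_add_card_connectedComponent_le [Finite α] (hG : G.IsAcyclic) :
    Nat.card G.edgeSet + Nat.card G.ConnectedComponent ≤ Nat.card α := by
  induction hn : Nat.card G.edgeSet generalizing G with
  | zero =>
    simpa using Nat.card_le_card_of_surjective G.connectedComponentMk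
      (ConnectedComponent.ind fun v => ⟨v, rfl⟩)
  | succ n ih =>
    obtain ⟨⟨e, he⟩⟩ : Nonempty G.edgeSet := (Nat.card_pos_iff.mp (by omega)).1
    induction e using Sym2.ind with
    | h u v =>
      have hadj : G.Adj u v := he
      have hbr := isAcyclic_iff_forall_adj_isBridge.mp hG hadj
      have hcard : Nat.card (G.deleteEdges {s(u, v)}).edgeSet = n := by
        rw [Nat.card_coe_set_eq, edgeSet_deleteEdges, Set.ncard_sdiff_singleton_of_mem he,
          ← Nat.card_coe_set_eq, hn, Nat.add_sub_cancel]
      have := ih (hG.anti (G.deleteEdges_le _)) hcard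
      have := card_connectedComponent_lt_deleteEdges_of_isBridge hadj hbr
      omega

lemma sum_ncard_neighborSet_inr_eq_card_edgeSet {β : Type*} [Finite α] [Fintype β]
    {H : SimpleGraph (α ⊕ β)} (hl : ∀ a a' : α, ¬ H.Adj (.inl a) (.inl a'))
    (hr : ∀ b b' : β, ¬ H.Adj (.inr b) (.inr b')) :
    ∑ b : β, (H.neighborSet (.inr b)).ncard = Nat.card H.edgeSet := by
  have := Fintype.ofFinite α
  classical
  have hbip : H.IsBipartiteWith (Finset.univ.map .inl : Finset (α ⊕ β))
      (Finset.univ.map .inr : Finset (α ⊕ β)) := by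
    refine ⟨by simp [Set.disjoint_left], ?_⟩
    rintro (a | b) (a' | b') h
    · exact absurd h (hl a a')
    · simp
    · simp
    · exact absurd h (hr b b')
  rw [Nat.card_eq_fintype_card, ← edgeFinset_card,
    ← isBipartiteWith_sum_degrees_eq_card_edges' hbip, Finset.sum_map]
  simp only [← Nat.card_coe_set_eq, Nat.card_eq_fintype_card, card_neighborSet_eq_degree]
  rfl

end SimpleGraph

section BipRestrict

variable {r : V → E → Prop} {H H' : SimpleGraph (V ⊕ E)} {A : Set E}

def bipRestrictEmbedding (r : V → E → Prop) (H : SimpleGraph (V ⊕ E)) (A : Set E) :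
    BipRestrict r H A ↪g H where
  toEmbedding := .sumMap (.subtype _) (.subtype _)
  map_rel_iff' := Iff.rfl

lemma bipRestrict_mono (h : H ≤ H') : BipRestrict r H A ≤ BipRestrict r H' A :=
  fun _ _ hadj => h hadj

lemma SimpleGraph.IsAcyclic.bipRestrict (hH : H.IsAcyclic) : (BipRestrict r H A).IsAcyclic :=
  hH.embedding (bipRestrictEmbedding r H A)

lemma ncard_neighborSet_bipRestrict_inr (hH : H ≤ BipGraph r) (e : A) :
    ((BipRestrict r H A).neighborSet (.inr e)).ncard = (H.neighborSet (.inr e.1)).ncard := by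
  refine Set.ncard_preimage_of_injective_subset_range (bipRestrictEmbedding r H A).injective ?_
  intro y hy
  obtain ⟨_, _, he, -, -⟩ | ⟨v, e', he, rfl, hr⟩ := hH hy
  · simp at he
  · obtain rfl : e' = e.1 := Sum.inr_injective he.symm
    exact ⟨.inl ⟨v, e.1, e.2, hr⟩, rfl⟩

lemma card_edgeSet_bipRestrict [Finite V] (hH : H ≤ BipGraph r) (A : Finset E) :
    Nat.card (BipRestrict r H ↑A).edgeSet = ∑ e ∈ A, (H.neighborSet (.inr e)).ncard := by
  rw [← SimpleGraph.sum_ncard_neighborSet_inr_eq_card_edgeSet]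
  · simp only [ncard_neighborSet_bipRestrict_inr hH]
    exact Finset.sum_coe_sort A fun e => (H.neighborSet (.inr e)).ncard
  · intro a a' h
    simpa [BipGraph] using hH h
  · intro b b' h
    simpa [BipGraph] using hH h

end BipRestrict

theorem hypertree_sum_le_mu_general {V E : Type*} [Fintype V] (r : V → E → Prop)
    (f : E → ℕ) (hf : IsHypertree r f)
    (E' : Finset E) :
    ∑ e ∈ E', f e ≤ mu r (↑E' : Set E) := by
  obtain ⟨τ, ⟨hτG, -, hτ⟩, hdeg⟩ := hf
  have hforest :=
    (hτ.bipRestrict (r := r) (A := ↑E')).card_edgeSet_add_card_connectedComponent_le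
  have hedges : Nat.card (BipRestrict r τ ↑E').edgeSet = ∑ e ∈ E', f e + E'.card := by
    simp only [card_edgeSet_bipRestrict hτG, hdeg, Finset.sum_add_distrib, Finset.sum_const,
      smul_eq_mul, mul_one]
  have hcomp := ConnectedComponent.card_le_card_of_le (bipRestrict_mono (r := r) (A := ↑E') hτG)
  rw [Nat.card_sum, hedges, Nat.card_coe_set_eq (E' : Set E), Set.ncard_coe_finset] at hforest
  unfold mu
  omega

/-- `∑_{e ∈ E'} f(e) ≤ μ(E')` for every nonempty `E' ⊆ E`. -/
theorem hypertree_sum_le_mu {V E : Type*} [Fintype V] [Fintype E] (r : V → E → Prop)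
    (hconn : (BipGraph r).Connected) (f : E → ℕ) (hf : IsHypertree r f)
    (E' : Finset E) (hne : E'.Nonempty) :
    ∑ e ∈ E', f e ≤ mu r (↑E' : Set E) :=
  hypertree_sum_le_mu_general r f hf E'
end

section
/- Let G be a connected bipartite graph with colour classes V and E, and let f be a hypertree of G. If A ⊆ E and B ⊆ E are both tight at f, then A ∩ B and A ∪ B are both tight at f. -/
open SimpleGraph

variable {V E : Type*}

/-!
Let `k(S)` be the number of components of the spanning subgraph of `G` formed by the edges at
the hyperedges `S`. Then `μ(S) = |V ⊔ E| - |S| - k(S)`, and `k` is supermodular (the rank of a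
graphic matroid is submodular), so `μ` is submodular. A spanning tree realizing `f`, restricted
to the edges at `S`, is a forest with `∑_S (f + 1)` edges and at least `k(S)` components, so
`∑_S f ≤ μ(S)`. For tight `A`, `B` this gives
`μ(A∩B) + μ(A∪B) ≤ μA + μB = fA + fB = f(A∩B) + f(A∪B) ≤ μ(A∩B) + μ(A∪B)`,
which forces equality throughout.
-/

theorem Function.Surjective.natCard_eq_add_one {α β : Type*} [Finite α] {φ : α → β}
    (hφ : Function.Surjective φ) {a b : α} (hab : a ≠ b) (hφab : φ a = φ b)
    (hinj : Set.InjOn φ {b}ᶜ) : Nat.card α = Nat.card β + 1 := by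
  have hbij : Set.BijOn φ {b}ᶜ Set.univ := by
    refine ⟨Set.mapsTo_univ _ _, hinj, fun y _ => ?_⟩
    obtain ⟨x, rfl⟩ := hφ y
    by_cases hx : x = b
    · exact ⟨a, hab, hx ▸ hφab⟩
    · exact ⟨x, hx, rfl⟩
  rw [← Set.ncard_univ β, ← hbij.ncard_eq, ← Set.ncard_univ α,
    ← Set.ncard_sdiff_singleton_add_one (Set.mem_univ b), Set.compl_eq_univ_sdiff]

namespace SimpleGraph

variable {W : Type*} {H H' : SimpleGraph W} {x y : W}

theorem Reachable.of_sup_edge {u v : W} (h : (H ⊔ edge x y).Reachable u v) :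
    H.Reachable u v ∨ (H.Reachable u x ∧ H.Reachable y v) ∨
      (H.Reachable u y ∧ H.Reachable x v) := by
  obtain ⟨w⟩ := h
  induction w with
  | nil => exact Or.inl .rfl
  | @cons a b c hab w ih =>
    rcases hab with hab | hab
    · exact ih.imp (hab.reachable.trans ·) (.imp (And.imp_left (hab.reachable.trans ·))
        (And.imp_left (hab.reachable.trans ·)))
    · obtain ⟨⟨rfl, rfl⟩ | ⟨rfl, rfl⟩, -⟩ := (edge_adj ..).mp hab
      · rcases ih with h | ⟨h₁, h₂⟩ | ⟨-, h₂⟩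
        exacts [Or.inr (Or.inl ⟨.rfl, h⟩), Or.inl (h₁.symm.trans h₂), Or.inl h₂]
      · rcases ih with h | ⟨-, h₂⟩ | ⟨h₁, h₂⟩
        exacts [Or.inr (Or.inr ⟨.rfl, h⟩), Or.inl h₂, Or.inl (h₁.symm.trans h₂)]

theorem card_connectedComponent_sup_edge_of_reachable (hxy : H.Reachable x y) :
    Nat.card (H ⊔ edge x y).ConnectedComponent = Nat.card H.ConnectedComponent := by
  refine Nat.card_congr (.ofBijective _ ⟨?_, ConnectedComponent.surjective_map_ofLE
    (le_sup_left : H ≤ H ⊔ edge x y)⟩) |>.symm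
  refine ConnectedComponent.ind₂ fun u v huv => ConnectedComponent.sound ?_
  rcases (ConnectedComponent.exact huv).of_sup_edge with h | ⟨h₁, h₂⟩ | ⟨h₁, h₂⟩
  exacts [h, h₁.trans (hxy.trans h₂), h₁.trans (hxy.symm.trans h₂)]

theorem card_connectedComponent_eq_sup_edge_add_one [Finite W] (hne : x ≠ y)
    (hxy : ¬H.Reachable x y) :
    Nat.card H.ConnectedComponent = Nat.card (H ⊔ edge x y).ConnectedComponent + 1 := by
  have hxy' : (H ⊔ edge x y).Adj x y := .inr ((edge_adj ..).mpr ⟨.inl ⟨rfl, rfl⟩, hne⟩)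
  refine (ConnectedComponent.surjective_map_ofLE (le_sup_left : H ≤ H ⊔ edge x y))
    |>.natCard_eq_add_one (a := H.connectedComponentMk x) (b := H.connectedComponentMk y)
      (fun h => hxy (ConnectedComponent.exact h)) (ConnectedComponent.sound hxy'.reachable) ?_
  rintro ⟨u⟩ hu ⟨v⟩ hv huv
  refine ConnectedComponent.sound ?_
  have hu : ¬H.Reachable u y := fun h => hu (ConnectedComponent.sound h)
  have hv : ¬H.Reachable y v := fun h => hv (ConnectedComponent.sound h.symm)
  rcases (ConnectedComponent.exact huv).of_sup_edge with h | ⟨-, h⟩ | ⟨h, -⟩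
  exacts [h, absurd h hv, absurd h hu]

theorem card_connectedComponent_add_sup_edge_le [Finite W] (h : H' ≤ H) (x y : W) :
    Nat.card H.ConnectedComponent + Nat.card (H' ⊔ edge x y).ConnectedComponent ≤
      Nat.card H'.ConnectedComponent + Nat.card (H ⊔ edge x y).ConnectedComponent := by
  by_cases hne : x = y
  · simp [hne, edge_self_eq_bot, add_comm]
  by_cases hxy : H.Reachable x y
  · rw [card_connectedComponent_sup_edge_of_reachable hxy, add_comm]
    exact Nat.add_le_add_right (ConnectedComponent.card_le_card_of_le le_sup_left) _
  · rw [card_connectedComponent_eq_sup_edge_add_one hne hxy,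
      card_connectedComponent_eq_sup_edge_add_one hne (fun h' => hxy (h'.mono h))]
    omega

theorem fromEdgeSet_insert_mk (s : Set (Sym2 W)) :
    fromEdgeSet (insert s(x, y) s) = fromEdgeSet s ⊔ edge x y := by
  rw [Set.insert_eq, fromEdgeSet_union, sup_comm, edge]

theorem card_connectedComponent_add_sup_fromEdgeSet_le [Finite W] (h : H' ≤ H)
    (s : Finset (Sym2 W)) :
    Nat.card H.ConnectedComponent + Nat.card (H' ⊔ fromEdgeSet s).ConnectedComponent ≤
      Nat.card H'.ConnectedComponent + Nat.card (H ⊔ fromEdgeSet s).ConnectedComponent := by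
  classical
  induction s using Finset.induction_on with
  | empty => simp [add_comm]
  | insert a s _ ih =>
    induction a using Sym2.ind with
    | _ x y =>
      simp only [Finset.coe_insert, fromEdgeSet_insert_mk, ← sup_assoc]
      have := card_connectedComponent_add_sup_edge_le (sup_le_sup_right h (fromEdgeSet s)) x y
      omega

/-- Submodularity of the rank function `|W| - #components` of the graphic matroid. -/
theorem card_connectedComponent_add_le_inf_add_sup [Finite W] (H₁ H₂ : SimpleGraph W) :
    Nat.card H₁.ConnectedComponent + Nat.card H₂.ConnectedComponent ≤
      Nat.card (H₁ ⊓ H₂).ConnectedComponent +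
        Nat.card (H₁ ⊔ H₂).ConnectedComponent := by
  have h := card_connectedComponent_add_sup_fromEdgeSet_le (inf_le_left : H₁ ⊓ H₂ ≤ H₁)
    H₂.edgeSet.toFinite.toFinset
  rw [Set.Finite.coe_toFinset, fromEdgeSet_edgeSet, sup_eq_right.mpr inf_le_right] at h
  omega

theorem card_connectedComponent_bot :
    Nat.card (⊥ : SimpleGraph W).ConnectedComponent = Nat.card W :=
  Nat.card_congr (.ofBijective _ ⟨fun _ _ h => reachable_bot.mp (ConnectedComponent.exact h),
    fun c => c.exists_rep⟩) |>.symm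

theorem IsAcyclic.card_edgeSet_add_card_connectedComponent [Finite W] (hH : H.IsAcyclic) :
    Nat.card H.edgeSet + Nat.card H.ConnectedComponent = Nat.card W := by
  classical
  suffices ∀ s : Finset (Sym2 W), (fromEdgeSet (s : Set (Sym2 W))).IsAcyclic →
      Nat.card (fromEdgeSet (s : Set (Sym2 W))).edgeSet +
        Nat.card (fromEdgeSet (s : Set (Sym2 W))).ConnectedComponent = Nat.card W by
    simpa using this H.edgeSet.toFinite.toFinset (by simpa using hH)
  intro s
  induction s using Finset.induction_on with
  | empty => simp [card_connectedComponent_bot]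
  | insert a s _ ih =>
    induction a using Sym2.ind with
    | _ x y =>
      rw [Finset.coe_insert, fromEdgeSet_insert_mk, isAcyclic_sup_fromEdgeSet_iff]
      rintro ⟨hacyc, hreach⟩
      by_cases hxy : (fromEdgeSet (s : Set (Sym2 W))).Reachable x y
      · rcases hreach hxy with rfl | hadj
        · rw [edge_self_eq_bot, sup_bot_eq]
          exact ih hacyc
        · rw [sup_edge_of_adj _ hadj]
          exact ih hacyc
      · have hne : x ≠ y := fun h => hxy (h ▸ .rfl)
        have hcard := card_connectedComponent_eq_sup_edge_add_one hne hxy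
        have hedge : Nat.card (fromEdgeSet (s : Set (Sym2 W)) ⊔ edge x y).edgeSet =
            Nat.card (fromEdgeSet (s : Set (Sym2 W))).edgeSet + 1 := by
          rw [edgeSet_sup, edgeSet_edge_of_ne hne, Set.union_singleton, Nat.card_coe_set_eq,
            Nat.card_coe_set_eq, Set.ncard_insert_of_notMem (a := s(x, y))
              fun h => hxy ((mem_edgeSet _).mp h).reachable]
        have := ih hacyc
        omega

section Comap

variable {W' : Type*} {ι : W' → W}

theorem Reachable.comap_of_forall_adj_mem_range (hι : Function.Injective ι)
    (hH : ∀ ⦃u v⦄, H.Adj u v → u ∈ Set.range ι) {a b : W'}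
    (h : H.Reachable (ι a) (ι b)) :
    (H.comap ι).Reachable a b := by
  obtain ⟨w⟩ := h
  suffices ∀ {p q : W} (w : H.Walk p q) (a b : W'), ι a = p → ι b = q →
      (H.comap ι).Reachable a b from this w a b rfl rfl
  intro p q w
  induction w with
  | nil => rintro a b rfl hb; rw [hι hb]
  | cons hpq w ih =>
    rintro a b rfl rfl
    obtain ⟨c, rfl⟩ := hH hpq.symm
    exact (Adj.reachable (by simpa using hpq)).trans (ih c b rfl rfl)

theorem Reachable.eq_of_notMem_range (hH : ∀ ⦃u v⦄, H.Adj u v → u ∈ Set.range ι)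
    {u v : W} (hu : u ∉ Set.range ι) (h : H.Reachable u v) : u = v := by
  obtain ⟨w⟩ := h
  cases w with
  | nil => rfl
  | cons huv _ => exact absurd (hH huv) hu

theorem card_connectedComponent_eq_comap_add [Finite W] (hι : Function.Injective ι)
    (hH : ∀ ⦃u v⦄, H.Adj u v → u ∈ Set.range ι) :
    Nat.card H.ConnectedComponent =
      Nat.card (H.comap ι).ConnectedComponent + Nat.card ↥(Set.range ι)ᶜ := by
  let Φ : (H.comap ι).ConnectedComponent ⊕ ↥(Set.range ι)ᶜ → H.ConnectedComponent :=
    Sum.elim (ConnectedComponent.map (Hom.comap ι H)) fun u => H.connectedComponentMk u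
  have hΦ : Function.Bijective Φ := by
    constructor
    · rintro (c | ⟨u, hu⟩) (d | ⟨v, hv⟩) h
      · obtain ⟨a, rfl⟩ := c.exists_rep
        obtain ⟨b, rfl⟩ := d.exists_rep
        exact congrArg Sum.inl (ConnectedComponent.sound
          ((ConnectedComponent.exact (G := H) h).comap_of_forall_adj_mem_range hι hH))
      · obtain ⟨a, rfl⟩ := c.exists_rep
        have h := (ConnectedComponent.exact (G := H) h).symm.eq_of_notMem_range hH hv
        exact absurd ⟨a, h.symm⟩ hv
      · obtain ⟨b, rfl⟩ := d.exists_rep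
        have h := (ConnectedComponent.exact (G := H) h).eq_of_notMem_range hH hu
        exact absurd ⟨b, h.symm⟩ hu
      · exact congrArg Sum.inr (Subtype.ext
          ((ConnectedComponent.exact (G := H) h).eq_of_notMem_range hH hu))
    · rintro ⟨u⟩
      by_cases hu : u ∈ Set.range ι
      · obtain ⟨a, rfl⟩ := hu
        exact ⟨.inl ((H.comap ι).connectedComponentMk a), rfl⟩
      · exact ⟨.inr ⟨u, hu⟩, rfl⟩
  have := Finite.of_injective ι hι
  rw [← Nat.card_sum]
  exact (Nat.card_congr (.ofBijective Φ hΦ)).symm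

end Comap

section Touching

variable {U U' : Set W}

def touching (H : SimpleGraph W) (U : Set W) : SimpleGraph W where
  Adj u v := H.Adj u v ∧ (u ∈ U ∨ v ∈ U)
  symm := ⟨fun _ _ h => ⟨h.1.symm, h.2.symm⟩⟩
  loopless := ⟨fun _ h => H.irrefl h.1⟩

@[simp]
theorem touching_adj {u v : W} : (H.touching U).Adj u v ↔ H.Adj u v ∧ (u ∈ U ∨ v ∈ U) :=
  Iff.rfl

theorem touching_le : H.touching U ≤ H := fun _ _ h => h.1

theorem touching_mono (hH : H' ≤ H) (hU : U' ⊆ U) : H'.touching U' ≤ H.touching U :=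
  fun _ _ h => ⟨hH h.1, h.2.imp (@hU _) (@hU _)⟩

theorem touching_union : H.touching (U ∪ U') = H.touching U ⊔ H.touching U' := by
  ext u v
  simp only [touching_adj, sup_adj, Set.mem_union]
  tauto

theorem card_edgeSet_touching [Finite W] (U : Finset W)
    (hU : ∀ u ∈ U, ∀ v ∈ U, ¬H.Adj u v) :
    Nat.card (H.touching U).edgeSet = ∑ u ∈ U, (H.neighborSet u).ncard := by
  let g : (Σ u : U, H.neighborSet u) → (H.touching U).edgeSet :=
    fun p => ⟨s(p.1, p.2), (mem_edgeSet _).mpr ⟨p.2.2, .inl p.1.2⟩⟩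
  have hg : Function.Bijective g := by
    constructor
    · rintro ⟨⟨u, hu⟩, ⟨w, hw⟩⟩ ⟨⟨u', hu'⟩, ⟨w', hw'⟩⟩ h
      obtain ⟨rfl, rfl⟩ | ⟨rfl, rfl⟩ := Sym2.eq_iff.mp (congrArg Subtype.val h)
      · rfl
      · exact absurd hw (hU _ hu _ hu')
    · rintro ⟨e, he⟩
      induction e using Sym2.ind with
      | _ u v =>
        obtain ⟨huv, hu | hv⟩ := (mem_edgeSet _).mp he
        · exact ⟨⟨⟨u, hu⟩, ⟨v, huv⟩⟩, rfl⟩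
        · exact ⟨⟨⟨v, hv⟩, ⟨u, huv.symm⟩⟩, Subtype.ext Sym2.eq_swap⟩
  rw [← Nat.card_congr (.ofBijective g hg), Nat.card_sigma,
    ← Finset.sum_coe_sort U (fun u => (H.neighborSet u).ncard)]
  simp only [Nat.card_coe_set_eq]

end Touching

end SimpleGraph

section BipGraph

variable {r : V → E → Prop} {v v' : V} {e e' : E}

@[simp] theorem bipGraph_adj_inl_inr : (BipGraph r).Adj (.inl v) (.inr e) ↔ r v e := by
  simp [BipGraph]

@[simp] theorem bipGraph_adj_inr_inl : (BipGraph r).Adj (.inr e) (.inl v) ↔ r v e := by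
  simp [BipGraph]

@[simp] theorem bipGraph_not_adj_inl_inl : ¬(BipGraph r).Adj (.inl v) (.inl v') := by
  simp [BipGraph]

@[simp] theorem bipGraph_not_adj_inr_inr : ¬(BipGraph r).Adj (.inr e) (.inr e') := by
  simp [BipGraph]

theorem bipRestrict_eq_comap (S : Set E) :
    BipRestrict r (BipGraph r) S =
      ((BipGraph r).touching (Sum.inr '' S)).comap (Sum.map Subtype.val Subtype.val) := by
  ext (⟨v, -⟩ | ⟨e, he⟩) (⟨v', -⟩ | ⟨e', he'⟩) <;> simp_all [BipRestrict]

theorem mem_range_of_touching_adj {S : Set E} {x y : V ⊕ E}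
    (h : ((BipGraph r).touching (Sum.inr '' S)).Adj x y) :
    x ∈ Set.range
      (Sum.map (Subtype.val : {v : V // ∃ e ∈ S, r v e} → V) (Subtype.val : S → E)) := by
  obtain ⟨hxy, hS⟩ := h
  rcases x with v | e <;> rcases y with v' | e' <;> simp at hxy hS
  · exact ⟨.inl ⟨v, e', hS, hxy⟩, rfl⟩
  · exact ⟨.inr ⟨e, hS⟩, rfl⟩

/-- Unlike the graphs `BipRestrict r (BipGraph r) S`, the graphs `touching` for different `S`
share one vertex set; outside `⋃ S ∪ S` they only have isolated vertices. -/
theorem card_connectedComponent_touching_add [Finite V] [Finite E] (S : Set E) :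
    Nat.card ((BipGraph r).touching (Sum.inr '' S)).ConnectedComponent +
        Nat.card {v : V // ∃ e ∈ S, r v e} + Nat.card S =
      Nat.card (BipRestrict r (BipGraph r) S).ConnectedComponent + Nat.card (V ⊕ E) := by
  let ι : {v : V // ∃ e ∈ S, r v e} ⊕ S → V ⊕ E := Sum.map Subtype.val Subtype.val
  have hι : Function.Injective ι :=
    Sum.map_injective.mpr ⟨Subtype.val_injective, Subtype.val_injective⟩
  have hrange : Nat.card (Set.range ι) + Nat.card ↥(Set.range ι)ᶜ = Nat.card (V ⊕ E) := by
    simp only [Nat.card_coe_set_eq]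
    exact Set.ncard_add_ncard_compl _
  rw [Nat.card_range_of_injective hι, Nat.card_sum] at hrange
  rw [card_connectedComponent_eq_comap_add hι fun _ _ => mem_range_of_touching_adj,
    ← bipRestrict_eq_comap]
  omega

end BipGraph

section Mu

variable {r : V → E → Prop} [Finite V]

theorem card_connectedComponent_bipRestrict_le (hr : ∀ e, ∃ v, r v e) (S : Set E) :
    Nat.card (BipRestrict r (BipGraph r) S).ConnectedComponent ≤
      Nat.card {v : V // ∃ e ∈ S, r v e} := by
  refine Nat.card_le_card_of_surjective
    (fun v => (BipRestrict r (BipGraph r) S).connectedComponentMk (.inl v)) fun c => ?_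
  obtain ⟨v | ⟨e, he⟩, rfl⟩ := c.exists_rep
  · exact ⟨v, rfl⟩
  · obtain ⟨v, hve⟩ := hr e
    have hadj :
        (BipRestrict r (BipGraph r) S).Adj (.inl ⟨v, e, he, hve⟩) (.inr ⟨e, he⟩) := by
      simpa [BipRestrict]
    exact ⟨⟨v, e, he, hve⟩, ConnectedComponent.sound hadj.reachable⟩

variable [Finite E]

theorem mu_add_card_add_card_connectedComponent (hr : ∀ e, ∃ v, r v e) (S : Set E) :
    mu r S + Nat.card S + Nat.card ((BipGraph r).touching (Sum.inr '' S)).ConnectedComponent =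
      Nat.card (V ⊕ E) := by
  have := card_connectedComponent_touching_add (r := r) S
  have := card_connectedComponent_bipRestrict_le hr S
  unfold mu
  omega

theorem mu_inter_add_mu_union_le (hr : ∀ e, ∃ v, r v e) (A B : Set E) :
    mu r (A ∩ B) + mu r (A ∪ B) ≤ mu r A + mu r B := by
  have hcomp := card_connectedComponent_add_le_inf_add_sup
    ((BipGraph r).touching (Sum.inr '' A)) ((BipGraph r).touching (Sum.inr '' B))
  have hinf : (BipGraph r).touching (Sum.inr '' (A ∩ B)) ≤
      (BipGraph r).touching (Sum.inr '' A) ⊓ (BipGraph r).touching (Sum.inr '' B) :=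
    le_inf (touching_mono le_rfl (Set.image_mono Set.inter_subset_left))
      (touching_mono le_rfl (Set.image_mono Set.inter_subset_right))
  rw [← touching_union, ← Set.image_union] at hcomp
  have := ConnectedComponent.card_le_card_of_le hinf
  have := Set.ncard_inter_add_ncard_union A B
  have := mu_add_card_add_card_connectedComponent hr A
  have := mu_add_card_add_card_connectedComponent hr B
  have := mu_add_card_add_card_connectedComponent hr (A ∩ B)
  have := mu_add_card_add_card_connectedComponent hr (A ∪ B)
  simp only [Nat.card_coe_set_eq] at *
  omega

end Mu

section Hypertree

variable {r : V → E → Prop} {f : E → ℕ}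

theorem IsHypertree.exists_rel (hf : IsHypertree r f) (e : E) : ∃ v, r v e := by
  obtain ⟨τ, ⟨hτ, -⟩, hdeg⟩ := hf
  obtain ⟨x, hx⟩ :=
    Set.nonempty_of_ncard_ne_zero (s := τ.neighborSet (.inr e)) (by simp [hdeg])
  rcases x with v | e'
  · exact ⟨v, by simpa using hτ hx⟩
  · exact absurd (hτ hx) bipGraph_not_adj_inr_inr

variable [Finite V] [Finite E]

theorem sum_add_card_add_card_connectedComponent_touching {τ : SimpleGraph (V ⊕ E)}
    (hτ : τ ≤ BipGraph r) (hacyc : τ.IsAcyclic)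
    (hdeg : ∀ e, (τ.neighborSet (.inr e)).ncard = f e + 1) (C : Finset E) :
    ∑ e ∈ C, f e + C.card + Nat.card (τ.touching (Sum.inr '' C)).ConnectedComponent =
      Nat.card (V ⊕ E) := by
  have hindep : ∀ u ∈ C.map .inr, ∀ v ∈ C.map .inr, ¬τ.Adj u v := by
    simp only [Finset.mem_map, Function.Embedding.inr_apply]
    rintro _ ⟨e, -, rfl⟩ _ ⟨e', -, rfl⟩ h
    exact bipGraph_not_adj_inr_inr (hτ h)
  rw [show Sum.inr '' (C : Set E) = ↑(C.map (.inr : E ↪ V ⊕ E)) by simp,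
    ← (hacyc.anti touching_le).card_edgeSet_add_card_connectedComponent,
    card_edgeSet_touching _ hindep]
  simp [hdeg, Finset.sum_add_distrib]

theorem IsHypertree.sum_le_mu (hf : IsHypertree r f) (C : Finset E) :
    ∑ e ∈ C, f e ≤ mu r C := by
  have := mu_add_card_add_card_connectedComponent hf.exists_rel (C : Set E)
  obtain ⟨τ, ⟨hτ, -, hacyc⟩, hdeg⟩ := hf
  have := sum_add_card_add_card_connectedComponent_touching hτ hacyc hdeg C
  have := ConnectedComponent.card_le_card_of_le
    (touching_mono hτ (le_refl (Sum.inr '' (C : Set E))))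
  simp only [Nat.card_coe_set_eq, Set.ncard_coe_finset] at *
  omega

end Hypertree

theorem tight_inter_union_general {V E : Type*} [Fintype V] [Fintype E] [DecidableEq E]
    (r : V → E → Prop) (f : E → ℕ) (hf : IsHypertree r f)
    (A B : Finset E) (hA : Tight r f A) (hB : Tight r f B) :
    Tight r f (A ∩ B) ∧ Tight r f (A ∪ B) := by
  have hmu := mu_inter_add_mu_union_le hf.exists_rel A B
  rw [← Finset.coe_inter, ← Finset.coe_union] at hmu
  have hinter := hf.sum_le_mu (A ∩ B)
  have hunion := hf.sum_le_mu (A ∪ B)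
  have hsum := Finset.sum_union_inter (s₁ := A) (s₂ := B) (f := f)
  unfold Tight at *
  omega

/-- tight sets are closed under intersection and union. -/
theorem tight_inter_union {V E : Type*} [Fintype V] [Fintype E] [DecidableEq E]
    (r : V → E → Prop) (hconn : (BipGraph r).Connected) (f : E → ℕ) (hf : IsHypertree r f)
    (A B : Finset E) (hA : Tight r f A) (hB : Tight r f B) :
    Tight r f (A ∩ B) ∧ Tight r f (A ∪ B) :=
  tight_inter_union_general r f hf A B hA hB
end

section
/- Let G be a connected bipartite graph with colour classes V and E, f a hypertree of G, and e₁, e₂, e₃ ∈ E. If the function obtained from f by decreasing f(e₁) by 1 and increasing f(e₂) by 1 is a hypertree, and the function obtained from f by decreasing f(e₂) by 1 and increasing f(e₃) by 1 is a hypertree, then the function obtained from f by decreasing f(e₁) by 1 and increasing f(e₃) by 1 is a hypertree. -/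
open SimpleGraph

variable {V E : Type*}

/-!
The degree vectors on `E` of the spanning trees of `BipGraph r` satisfy a strong exchange
property: if `deg T e > deg T' e`, then `deg T e' < deg T' e'` for some `e'` such that
`deg T - 𝟙 e + 𝟙 e'` is again the degree vector of a spanning tree. To find it, swap an edge of
`T` at `e` that is missing from `T'` for an edge of `T'` rejoining the two halves; if that edge
lands at some `e''` where `T` does not fall short of `T'`, the surplus has merely moved to `e''`,
and we repeat, each time with fewer edges outside `T'`. In particular no degree vector of a
spanning tree lies strictly below another one, which forces `f e₁ ≥ 1` and `f e₂ ≥ 1` (so the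
truncated subtraction in `Transfer` is harmless). Exchanging at `e₁` between trees realizing
`f - 𝟙 e₂ + 𝟙 e₃` and `f - 𝟙 e₁ + 𝟙 e₂`, the only possible `e'` is `e₂`, and the resulting tree
realizes `f - 𝟙 e₁ + 𝟙 e₃`.
-/

namespace SimpleGraph

variable {α : Type*} {G T T' : SimpleGraph α} {u v w p q : α}

theorem ncard_incidenceSet (G : SimpleGraph α) (w : α) :
    (G.incidenceSet w).ncard = (G.neighborSet w).ncard := by
  classical exact Set.ncard_congr' (G.incidenceSetEquivNeighborSet w)

theorem ncard_neighborSet_deleteEdges_add [Finite α] [DecidableEq α] (huv : G.Adj u v) (w : α) :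
    ((G.deleteEdges {s(u, v)}).neighborSet w).ncard + (if w ∈ s(u, v) then 1 else 0) =
      (G.neighborSet w).ncard := by
  have hinc : (G.deleteEdges {s(u, v)}).incidenceSet w = G.incidenceSet w \ {s(u, v)} := by
    ext; simp [incidenceSet, edgeSet_deleteEdges, and_right_comm]
  rw [← ncard_incidenceSet, ← ncard_incidenceSet, hinc]
  split_ifs with hw
  · exact Set.ncard_sdiff_singleton_add_one ⟨huv, hw⟩
  · rw [Set.sdiff_singleton_eq_self fun h => hw h.2, add_zero]

theorem ncard_neighborSet_sup_edge [Finite α] [DecidableEq α] (hpq : p ≠ q) (hn : ¬G.Adj p q)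
    (w : α) :
    ((G ⊔ edge p q).neighborSet w).ncard =
      (G.neighborSet w).ncard + (if w ∈ s(p, q) then 1 else 0) := by
  rw [← ncard_incidenceSet, ← ncard_incidenceSet]
  split_ifs with hw
  · have hinc : (G ⊔ edge p q).incidenceSet w = insert s(p, q) (G.incidenceSet w) := by
      ext e
      simp only [incidenceSet, edgeSet_sup, edgeSet_edge_of_ne hpq, Set.union_singleton,
        Set.mem_insert_iff, Set.mem_ofPred_eq]
      grind
    rw [hinc, Set.ncard_insert_of_notMem fun h => hn h.1]
  · have hinc : (G ⊔ edge p q).incidenceSet w = G.incidenceSet w := by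
      ext e
      simp only [incidenceSet, edgeSet_sup, edgeSet_edge_of_ne hpq, Set.union_singleton,
        Set.mem_insert_iff, Set.mem_ofPred_eq]
      grind
    rw [hinc, add_zero]

theorem Reachable.deleteEdges_or (h : G.Reachable u w) :
    (G.deleteEdges {s(u, v)}).Reachable u w ∨ (G.deleteEdges {s(u, v)}).Reachable v w := by
  set D := G.deleteEdges {s(u, v)}
  by_contra hw
  obtain ⟨walk⟩ := h
  obtain ⟨d, -, hx, hy⟩ :=
    walk.exists_boundary_dart {x | D.Reachable u x ∨ D.Reachable v x} (Or.inl .rfl) hw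
  apply hy
  by_cases hd : s(d.fst, d.snd) = s(u, v)
  · rcases Sym2.eq_iff.mp hd with ⟨-, h⟩ | ⟨-, h⟩
    · exact Or.inr (h ▸ .rfl)
    · exact Or.inl (h ▸ .rfl)
  · have hD : D.Adj d.fst d.snd := by simpa [D, d.adj] using hd
    exact hx.imp (·.trans hD.reachable) (·.trans hD.reachable)

theorem IsTree.exists_isTree_deleteEdges_sup_edge (hT : T.IsTree) (hT' : T'.Connected)
    (huv : T.Adj u v) :
    ∃ p q, T'.Adj p q ∧ ¬(T.deleteEdges {s(u, v)}).Adj p q ∧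
      (T.deleteEdges {s(u, v)} ⊔ edge p q).IsTree := by
  set D := T.deleteEdges {s(u, v)}
  have hsep : ¬D.Reachable u v :=
    isBridge_iff.mp (isAcyclic_iff_forall_adj_isBridge.mp hT.isAcyclic huv)
  have hside : ∀ w, D.Reachable u w ∨ D.Reachable v w := fun w =>
    (hT.connected.preconnected u w).deleteEdges_or
  obtain ⟨walk⟩ := hT'.preconnected u v
  obtain ⟨d, -, hp, hq⟩ := walk.exists_boundary_dart {w | D.Reachable u w} .rfl hsep
  have hq' : D.Reachable v d.snd := (hside _).resolve_left hq
  have hpq : ¬D.Reachable d.fst d.snd := fun h => hq (hp.trans h)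
  refine ⟨d.fst, d.snd, d.adj, fun h => hpq h.reachable, ?_, ?_⟩
  · have hDle : D ≤ D ⊔ edge d.fst d.snd := le_sup_left
    have hedge : (D ⊔ edge d.fst d.snd).Adj d.fst d.snd :=
      Or.inr ((edge_adj _ _ _ _).mpr ⟨Or.inl ⟨rfl, rfl⟩, d.adj.ne⟩)
    have huv' : (D ⊔ edge d.fst d.snd).Reachable u v :=
      ((hp.mono hDle).trans hedge.reachable).trans (hq'.symm.mono hDle)
    refine (connected_iff_exists_forall_reachable _).mpr ⟨u, fun w => ?_⟩
    rcases hside w with h | h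
    · exact h.mono hDle
    · exact huv'.trans (h.mono hDle)
  · exact (hT.isAcyclic.anti (deleteEdges_le _)).sup_edge_of_not_reachable hpq

end SimpleGraph

theorem IsSpanningTree.isTree {α : Type*} {G τ : SimpleGraph α} (h : IsSpanningTree G τ) :
    τ.IsTree :=
  ⟨h.2.1, h.2.2⟩

section Hypertree

variable {r : V → E → Prop}

noncomputable def hyperedgeDegree (τ : SimpleGraph (V ⊕ E)) (e : E) : ℕ :=
  (τ.neighborSet (Sum.inr e)).ncard

theorem isHypertree_iff {f : E → ℕ} :
    IsHypertree r f ↔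
      ∃ τ, IsSpanningTree (BipGraph r) τ ∧ hyperedgeDegree τ = f + 1 := by
  simp only [IsHypertree, funext_iff]
  rfl

theorem BipGraph.exists_inr_mem_iff {p q : V ⊕ E} (h : (BipGraph r).Adj p q) :
    ∃ e, ∀ x : E, Sum.inr x ∈ s(p, q) ↔ x = e := by
  rcases h with ⟨v, e, rfl, rfl, -⟩ | ⟨v, e, rfl, rfl, -⟩ <;> exact ⟨e, fun x => by simp⟩

theorem transfer_add_single [DecidableEq E] {f : E → ℕ} {e e' : E} (hne : e ≠ e')
    (hf : 1 ≤ f e) : Transfer f e e' + Pi.single e 1 = f + Pi.single e' 1 := by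
  funext x
  simp only [Transfer, Pi.add_apply, Pi.single_apply]
  split_ifs <;> grind

variable [Finite V] [Finite E]

theorem IsSpanningTree.exists_exchange_step [DecidableEq E] {T T' : SimpleGraph (V ⊕ E)}
    (hT : IsSpanningTree (BipGraph r) T)
    (hT' : IsSpanningTree (BipGraph r) T') {e : E}
    (he : hyperedgeDegree T' e < hyperedgeDegree T e) :
    ∃ T₁ e', IsSpanningTree (BipGraph r) T₁ ∧
      (T₁.edgeSet \ T'.edgeSet).ncard < (T.edgeSet \ T'.edgeSet).ncard ∧
      hyperedgeDegree T₁ + Pi.single e 1 = hyperedgeDegree T + Pi.single e' 1 := by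
  classical
  obtain ⟨w, hwT, hwT'⟩ := Set.exists_mem_notMem_of_ncard_lt_ncard he
  obtain ⟨p, q, hpq, hD, hT₁⟩ := hT.isTree.exists_isTree_deleteEdges_sup_edge hT'.2.1 hwT
  obtain ⟨e₀, he₀⟩ := BipGraph.exists_inr_mem_iff (hT.1 hwT)
  obtain rfl : e = e₀ := (he₀ e).mp (Sym2.mem_mk_left _ _)
  obtain ⟨e', he'⟩ := BipGraph.exists_inr_mem_iff (hT'.1 hpq)
  have hT₁G : T.deleteEdges {s(Sum.inr e, w)} ⊔ edge p q ≤ BipGraph r :=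
    sup_le ((deleteEdges_le _).trans hT.1) ((edge_le_iff _).mpr (Or.inr (hT'.1 hpq)))
  refine ⟨_, e', ⟨hT₁G, hT₁.connected, hT₁.isAcyclic⟩, ?_, ?_⟩
  · refine (Set.ncard_le_ncard ?_).trans_lt (Set.ncard_sdiff_singleton_lt_of_mem
      (a := s(Sum.inr e, w)) ⟨hwT, hwT'⟩)
    rintro x ⟨hx, hx'⟩
    rw [edgeSet_sup, edgeSet_deleteEdges] at hx
    rcases hx with ⟨hxT, hxa⟩ | hx
    · exact ⟨⟨hxT, hx'⟩, hxa⟩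
    · exact absurd (Set.mem_singleton_iff.mp (edgeSet_edge_subset hx) ▸ hpq) hx'
  · funext x
    have hdel := ncard_neighborSet_deleteEdges_add hwT (Sum.inr x)
    have hadd := ncard_neighborSet_sup_edge hpq.ne hD (Sum.inr x)
    simp only [hyperedgeDegree, Pi.add_apply, Pi.single_apply, he₀, he'] at hdel hadd ⊢
    split_ifs at * <;> omega

theorem IsSpanningTree.exists_exchange [DecidableEq E] {T T' : SimpleGraph (V ⊕ E)}
    (hT : IsSpanningTree (BipGraph r) T)
    (hT' : IsSpanningTree (BipGraph r) T') {e : E}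
    (he : hyperedgeDegree T' e < hyperedgeDegree T e) :
    ∃ e', hyperedgeDegree T e' < hyperedgeDegree T' e' ∧ ∃ T'', IsSpanningTree (BipGraph r) T'' ∧
      hyperedgeDegree T'' + Pi.single e 1 = hyperedgeDegree T + Pi.single e' 1 := by
  obtain ⟨T₁, e'', hT₁, hfewer, hdeg⟩ := hT.exists_exchange_step hT' he
  by_cases hdone : e'' ≠ e ∧ hyperedgeDegree T e'' < hyperedgeDegree T' e''
  · exact ⟨e'', hdone.2, T₁, hT₁, hdeg⟩
  have he'' : hyperedgeDegree T' e'' < hyperedgeDegree T₁ e'' := by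
    have := congrFun hdeg e''
    simp only [Pi.add_apply, Pi.single_apply] at this
    grind
  obtain ⟨e₄, h₄, T₂, hT₂, hdeg₂⟩ := hT₁.exists_exchange hT' he''
  have he₄ : hyperedgeDegree T e₄ < hyperedgeDegree T' e₄ := by
    have := congrFun hdeg e₄
    simp only [Pi.add_apply, Pi.single_apply] at this
    grind
  refine ⟨e₄, he₄, T₂, hT₂, add_right_cancel (b := Pi.single e'' 1) ?_⟩
  calc hyperedgeDegree T₂ + Pi.single e 1 + Pi.single e'' 1
      = hyperedgeDegree T₁ + Pi.single e 1 + Pi.single e₄ 1 := by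
        rw [add_right_comm, hdeg₂, add_right_comm]
    _ = hyperedgeDegree T + Pi.single e₄ 1 + Pi.single e'' 1 := by
        rw [hdeg, add_right_comm]
termination_by (T.edgeSet \ T'.edgeSet).ncard

theorem IsSpanningTree.not_hyperedgeDegree_lt {T T' : SimpleGraph (V ⊕ E)}
    (hT : IsSpanningTree (BipGraph r) T) (hT' : IsSpanningTree (BipGraph r) T') :
    ¬hyperedgeDegree T' < hyperedgeDegree T := by
  classical
  intro hlt
  obtain ⟨hle, e, he⟩ := Pi.lt_def.mp hlt
  obtain ⟨e', he', -⟩ := hT.exists_exchange hT' he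
  exact (hle e').not_gt he'

theorem IsHypertree.one_le_of_transfer {f : E → ℕ} {e e' : E} (hf : IsHypertree r f)
    (ht : IsHypertree r (Transfer f e e')) (hne : e ≠ e') : 1 ≤ f e := by
  obtain ⟨τ, hτ, hdeg⟩ := isHypertree_iff.mp hf
  obtain ⟨τ', hτ', hdeg'⟩ := isHypertree_iff.mp ht
  by_contra hzero
  refine hτ'.not_hyperedgeDegree_lt hτ ?_
  rw [hdeg, hdeg', Pi.lt_def]
  refine ⟨fun x => ?_, e', ?_⟩
  · simp only [Pi.add_apply, Transfer]
    split_ifs <;> grind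
  · simp [Transfer, hne.symm]

end Hypertree

theorem transfer_trans_general {V E : Type*} [Fintype V] [Fintype E] (r : V → E → Prop)
    (f : E → ℕ) (hf : IsHypertree r f)
    (e₁ e₂ e₃ : E) (h12 : e₁ ≠ e₂) (h23 : e₂ ≠ e₃) (h13 : e₁ ≠ e₃)
    (ht12 : IsHypertree r (Transfer f e₁ e₂)) (ht23 : IsHypertree r (Transfer f e₂ e₃)) :
    IsHypertree r (Transfer f e₁ e₃) := by
  classical
  have hf₁ := transfer_add_single h12 (hf.one_le_of_transfer ht12 h12)
  have hf₂ := transfer_add_single h23 (hf.one_le_of_transfer ht23 h23)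
  have hf₃ := transfer_add_single h13 (hf.one_le_of_transfer ht12 h12)
  obtain ⟨S₁, hS₁, hdeg₁⟩ := isHypertree_iff.mp ht12
  obtain ⟨S₂, hS₂, hdeg₂⟩ := isHypertree_iff.mp ht23
  have hgap : hyperedgeDegree S₁ e₁ < hyperedgeDegree S₂ e₁ := by
    have h₁ := congrFun hf₁ e₁
    have h₂ := congrFun hf₂ e₁
    simp only [hdeg₁, hdeg₂, Pi.add_apply, Pi.single_apply] at h₁ h₂ ⊢
    grind
  obtain ⟨e', hlt, T, hT, hdeg⟩ := hS₂.exists_exchange hS₁ hgap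
  obtain rfl : e₂ = e' := by
    have h₁ := congrFun hf₁ e'
    have h₂ := congrFun hf₂ e'
    simp only [hdeg₁, hdeg₂, Pi.add_apply, Pi.single_apply] at h₁ h₂ hlt
    grind
  refine isHypertree_iff.mpr ⟨T, hT, add_right_cancel (b := Pi.single e₁ 1) ?_⟩
  calc hyperedgeDegree T + Pi.single e₁ 1
      = Transfer f e₂ e₃ + Pi.single e₂ 1 + 1 := by rw [hdeg, hdeg₂, add_right_comm]
    _ = Transfer f e₁ e₃ + 1 + Pi.single e₁ 1 := by rw [hf₂, ← hf₃, add_right_comm]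

/-- transitivity of transfers of valence. -/
theorem transfer_trans {V E : Type*} [Fintype V] [Fintype E] (r : V → E → Prop)
    (hconn : (BipGraph r).Connected) (f : E → ℕ) (hf : IsHypertree r f)
    (e₁ e₂ e₃ : E) (h12 : e₁ ≠ e₂) (h23 : e₂ ≠ e₃) (h13 : e₁ ≠ e₃)
    (ht12 : IsHypertree r (Transfer f e₁ e₂)) (ht23 : IsHypertree r (Transfer f e₂ e₃)) :
    IsHypertree r (Transfer f e₁ e₃) :=
  transfer_trans_general r f hf e₁ e₂ e₃ h12 h23 h13 ht12 ht23
end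

section
/- Let G be a connected bipartite graph with colour classes V and E having a 2-vertex cut {e₁, e₂} ⊆ E, and let t be the number of connected components of G − {e₁, e₂}. Then the degree of the interior polynomial I_G(x) is at most min{|E| − 1, |V| − t + 1}. -/
open SimpleGraph

variable {V E : Type*}

/-!
A hypertree `f` satisfies `∑ f = |V| - 1`, and an internally inactive hyperedge `e` has
`f e ≥ 1`, since the transfer away from `e` must preserve this sum. The least hyperedge is never
internally inactive, which gives the bound `|E| - 1`.

For the other bound, let a spanning tree `τ` realise `f`. Following `τ` from any vertex of
`G - {e₁, e₂}` towards `e₁` shows that every component contains a `τ`-neighbour of `e₁` or `e₂`,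
and the neighbour `w` of `e₂` on the `τ`-path to `e₁` is not needed, because that path joins `w`
to a neighbour of `e₁` avoiding `e₂`. Hence `t ≤ f e₁ + f e₂ + 1`. If both `e₁` and `e₂` are
inactive, the transfer away from `min e₁ e₂` goes to a hyperedge outside the cut, and the same
bound for the new hypertree gives `t ≤ f e₁ + f e₂`. The inactive hyperedges outside `{e₁, e₂}`
number at most `∑ f - f e₁ - f e₂`, and the bound `|V| - t + 1` follows.
-/

lemma sum_transfer_add_min [Fintype E] (f : E → ℕ) {e e' : E} (h : e' ≠ e) :
    ∑ x, Transfer f e e' x + min (f e) 1 = ∑ x, f x + 1 := by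
  classical
  have hpt : ∀ x, Transfer f e e' x + (if x = e then min (f e) 1 else 0) =
      f x + if x = e' then 1 else 0 := by
    intro x
    unfold Transfer
    split_ifs <;> subst_vars <;> simp_all
  have hsum := Finset.sum_congr rfl fun x (_ : x ∈ Finset.univ) => hpt x
  simpa only [Finset.sum_add_distrib, Finset.sum_ite_eq', Finset.mem_univ, if_true] using hsum

namespace SimpleGraph

variable {α : Type*}

theorem Walk.exists_adj_boundary {G : SimpleGraph α} {U : Set α} {x y : α} (p : G.Walk x y)
    (hx : x ∈ U) (hy : y ∉ U) :
    ∃ z c, ∃ hz : z ∈ U, c ∉ U ∧ G.Adj z c ∧ c ∈ p.support ∧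
      (G.induce U).Reachable ⟨x, hx⟩ ⟨z, hz⟩ := by
  induction p with
  | nil => exact absurd hx hy
  | @cons u v w h q ih =>
    by_cases hv : v ∈ U
    · obtain ⟨z, c, hz, hc, hadj, hmem, hreach⟩ := ih hv hy
      have huv : (G.induce U).Adj ⟨u, hx⟩ ⟨v, hv⟩ := h
      exact ⟨z, c, hz, hc, hadj, q.support_subset_support_cons h hmem, huv.reachable.trans hreach⟩
    · exact ⟨u, v, hx, hv, h, by simp, Reachable.refl _⟩

theorem exists_adj_connectedComponentMk_eq {G τ : SimpleGraph α} (hle : τ ≤ G)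
    (hτ : τ.Preconnected) {a b w : α} (p : τ.Walk w a) (hb : b ∉ p.support)
    (K : (G.induce {x | x ≠ a ∧ x ≠ b}).ConnectedComponent) :
    ∃ y, ∃ hy : y ≠ a ∧ y ≠ b, (τ.Adj a y ∨ τ.Adj b y ∧ y ≠ w) ∧
      (G.induce {x | x ≠ a ∧ x ≠ b}).connectedComponentMk ⟨y, hy⟩ = K := by
  obtain ⟨⟨x, hx⟩, rfl⟩ := K.exists_rep
  have hmono : τ.induce {x | x ≠ a ∧ x ≠ b} ≤ G.induce {x | x ≠ a ∧ x ≠ b} := fun _ _ h => hle h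
  obtain ⟨z, c, hz, hc, hzc, -, hxz⟩ := (hτ x a).some.exists_adj_boundary hx (by simp)
  have hzx := ConnectedComponent.sound (hxz.mono hmono).symm
  obtain rfl | rfl : c = a ∨ c = b := by simpa only [Set.mem_ofPred_eq, not_and_or, not_not]
    using hc
  · exact ⟨z, hz, Or.inl hzc.symm, hzx⟩
  by_cases hzw : z = w
  · -- `w` is joined to `a` avoiding `b`, so its component also meets a neighbour of `a`
    subst hzw
    obtain ⟨z₂, c₂, hz₂, hc₂, hzc₂, hmem₂, hzz₂⟩ := p.exists_adj_boundary hz (by simp)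
    obtain rfl : c₂ = a := by
      simp only [Set.mem_ofPred_eq, not_and_or, not_not] at hc₂
      exact hc₂.resolve_right fun h => hb (h ▸ hmem₂)
    exact ⟨z₂, hz₂, Or.inl hzc₂.symm,
      (ConnectedComponent.sound (hzz₂.mono hmono).symm).trans hzx⟩
  · exact ⟨z, hz, Or.inr ⟨hzc.symm, hzw⟩, hzx⟩

theorem card_connectedComponent_induce_add_one_le [Finite α] {G τ : SimpleGraph α}
    (hle : τ ≤ G) (hτ : τ.Preconnected) {a b w : α} (hbw : τ.Adj b w) (p : τ.Walk w a)
    (hb : b ∉ p.support) :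
    Nat.card (G.induce {x | x ≠ a ∧ x ≠ b}).ConnectedComponent + 1 ≤
      (τ.neighborSet a).ncard + (τ.neighborSet b).ncard := by
  obtain ⟨T, hTdef⟩ : ∃ T, T = τ.neighborSet a ∪ (τ.neighborSet b \ {w}) := ⟨_, rfl⟩
  have hsurj : Function.Surjective fun y : {y : {x | x ≠ a ∧ x ≠ b} // y.1 ∈ T} =>
      (G.induce {x | x ≠ a ∧ x ≠ b}).connectedComponentMk y.1 := by
    intro K
    obtain ⟨y, hy, hyT, rfl⟩ := exists_adj_connectedComponentMk_eq hle hτ p hb K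
    exact ⟨⟨⟨y, hy⟩, hTdef ▸ hyT.imp id fun h => ⟨h.1, h.2⟩⟩, rfl⟩
  have hinj : Function.Injective fun y : {y : {x | x ≠ a ∧ x ≠ b} // y.1 ∈ T} =>
      (⟨y.1.1, y.2⟩ : T) := by
    rintro ⟨⟨y, _⟩, _⟩ ⟨⟨y', _⟩, _⟩ h
    cases congrArg Subtype.val h
    rfl
  have hT : T.ncard + 1 ≤ (τ.neighborSet a).ncard + (τ.neighborSet b).ncard := by
    subst hTdef
    have := Set.ncard_union_le (τ.neighborSet a) (τ.neighborSet b \ {w})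
    have := Set.ncard_sdiff_singleton_of_mem (s := τ.neighborSet b) hbw
    have := (Set.ncard_pos (s := τ.neighborSet b) (Set.toFinite _)).mpr ⟨w, hbw⟩
    omega
  have := (Nat.card_le_card_of_surjective _ hsurj).trans (Nat.card_le_card_of_injective _ hinj)
  rw [Nat.card_coe_set_eq] at this
  omega

end SimpleGraph

lemma isBipartiteWith_of_le_bipGraph {r : V → E → Prop} {τ : SimpleGraph (V ⊕ E)}
    (hle : τ ≤ BipGraph r) : τ.IsBipartiteWith (Set.range Sum.inl) (Set.range Sum.inr) where
  disjoint := Set.disjoint_left.mpr (by rintro _ ⟨v, rfl⟩ ⟨e, he⟩; cases he)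
  mem_of_adj _ _ h := by
    rcases hle h with ⟨v, e, rfl, rfl, -⟩ | ⟨v, e, rfl, rfl, -⟩ <;> simp

namespace IsHypertree

variable {r : V → E → Prop} {f : E → ℕ}

theorem sum_add_one [Fintype V] [Fintype E] (hf : IsHypertree r f) :
    ∑ e, f e + 1 = Fintype.card V := by
  classical
  obtain ⟨τ, ⟨hle, hconn, hacyc⟩, hdeg⟩ := hf
  have hbip : τ.IsBipartiteWith (Finset.univ.map .inl : Finset (V ⊕ E))
      (Finset.univ.map .inr : Finset (V ⊕ E)) := by
    simpa using isBipartiteWith_of_le_bipGraph hle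
  have hedges := isBipartiteWith_sum_degrees_eq_card_edges' hbip
  have htree := (⟨hconn, hacyc⟩ : τ.IsTree).card_edgeFinset
  simp only [Finset.sum_map, Function.Embedding.inr_apply, ← card_neighborSet_eq_degree,
    ← Nat.card_eq_fintype_card, Nat.card_coe_set_eq, hdeg] at hedges
  simp only [Fintype.card_sum, ← hedges, Finset.sum_add_distrib, Finset.sum_const,
    Finset.card_univ, smul_eq_mul, mul_one] at htree
  omega

theorem one_le_of_transfer_s12 [Fintype V] [Fintype E] (hf : IsHypertree r f) {e e' : E}
    (h : e' ≠ e) (hg : IsHypertree r (Transfer f e e')) : 1 ≤ f e := by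
  have := sum_transfer_add_min f h
  have := hf.sum_add_one
  have := hg.sum_add_one
  omega

theorem card_connectedComponent_le [Finite V] [Finite E] (hf : IsHypertree r f) {e₁ e₂ : E}
    (hne : e₁ ≠ e₂) :
    Nat.card ((BipGraph r).induce {x | x ≠ Sum.inr e₁ ∧ x ≠ Sum.inr e₂}).ConnectedComponent ≤
      f e₁ + f e₂ + 1 := by
  classical
  obtain ⟨τ, ⟨hle, hconn, -⟩, hdeg⟩ := hf
  obtain ⟨p, hp⟩ := (hconn.preconnected (Sum.inr e₂) (Sum.inr e₁)).some.toPath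
  cases p with
  | nil => exact absurd rfl hne
  | cons hbw q =>
    have := card_connectedComponent_induce_add_one_le hle hconn.preconnected hbw q
      ((Walk.cons_isPath_iff _ _).mp hp).2
    rw [hdeg, hdeg] at this
    omega

theorem card_connectedComponent_le_of_transfer [Fintype V] [Fintype E] (hf : IsHypertree r f)
    {e₁ e₂ a e' : E} (hne : e₁ ≠ e₂) (ha : a = e₁ ∨ a = e₂) (he' : e' ≠ e₁ ∧ e' ≠ e₂)
    (hg : IsHypertree r (Transfer f a e')) :
    Nat.card ((BipGraph r).induce {x | x ≠ Sum.inr e₁ ∧ x ≠ Sum.inr e₂}).ConnectedComponent ≤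
      f e₁ + f e₂ := by
  have hfa := hf.one_le_of_transfer_s12 (by rcases ha with rfl | rfl <;> simp [he']) hg
  have := hg.card_connectedComponent_le hne
  rcases ha with rfl | rfl <;>
    simp only [Transfer, if_true, if_false, hne, hne.symm, he'.1.symm, he'.2.symm] at this <;>
    omega

theorem intInact_le [Fintype V] [Fintype E] [LinearOrder E] (hf : IsHypertree r f) {e₁ e₂ : E}
    (hne : e₁ ≠ e₂) :
    intInact r f ≤ Fintype.card V -
      Nat.card ((BipGraph r).induce {x | x ≠ Sum.inr e₁ ∧ x ≠ Sum.inr e₂}).ConnectedComponent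
        + 1 := by
  classical
  set t := Nat.card ((BipGraph r).induce {x | x ≠ Sum.inr e₁ ∧ x ≠ Sum.inr e₂}).ConnectedComponent
  set D := Finset.univ.filter fun e => ∃ e', e' < e ∧ IsHypertree r (Transfer f e e')
  set P : Finset E := {e₁, e₂}
  have hD : intInact r f = D.card := by
    rw [intInact, Nat.card_eq_fintype_card, Fintype.card_subtype]
  have hDP := Finset.card_sdiff_add_card_inter D P
  have hsplit : ∑ e ∈ Finset.univ \ P, f e + (f e₁ + f e₂) = ∑ e, f e := by
    rw [← Finset.sum_pair hne]
    exact Finset.sum_sdiff (Finset.subset_univ P)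
  have hout : (D \ P).card ≤ ∑ e ∈ Finset.univ \ P, f e := by
    calc (D \ P).card ≤ ∑ e ∈ D \ P, f e := by
          simpa using Finset.card_nsmul_le_sum (D \ P) f 1 fun e he => by
            obtain ⟨e', hlt, hg⟩ := (Finset.mem_filter.mp (Finset.mem_sdiff.mp he).1).2
            exact hf.one_le_of_transfer_s12 hlt.ne hg
      _ ≤ ∑ e ∈ Finset.univ \ P, f e :=
          Finset.sum_le_sum_of_subset (Finset.sdiff_subset_sdiff (Finset.subset_univ D) le_rfl)
  have hin : t + (D ∩ P).card ≤ f e₁ + f e₂ + 2 := by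
    have hcut := hf.card_connectedComponent_le hne
    by_cases hPD : P ⊆ D
    · have hmin : min e₁ e₂ ∈ D := hPD (by rcases min_choice e₁ e₂ with h | h <;> simp [P, h])
      obtain ⟨e', hlt, hg⟩ := (Finset.mem_filter.mp hmin).2
      have := hf.card_connectedComponent_le_of_transfer hne (min_choice e₁ e₂)
        ⟨(hlt.trans_le (min_le_left _ _)).ne, (hlt.trans_le (min_le_right _ _)).ne⟩ hg
      have : (D ∩ P).card ≤ 2 :=
        (Finset.card_le_card Finset.inter_subset_right).trans (Finset.card_pair hne).le
      omega
    · have : (D ∩ P).card < P.card := Finset.card_lt_card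
        (Finset.inter_subset_right.ssubset_of_ne fun h => hPD (Finset.inter_eq_right.mp h))
      rw [Finset.card_pair hne] at this
      omega
  have := hf.sum_add_one
  omega

end IsHypertree

theorem intInact_le_card_sub_one [Fintype E] [LinearOrder E] (r : V → E → Prop) (f : E → ℕ) :
    intInact r f ≤ Fintype.card E - 1 := by
  rcases isEmpty_or_nonempty E with _ | _
  · simp [intInact]
  obtain ⟨m, hm⟩ := Finite.exists_min (id : E → E)
  have := Finite.card_subtype_lt (p := fun e => ∃ e', e' < e ∧ IsHypertree r (Transfer f e e'))
    (x := m) fun ⟨e', hlt, _⟩ => (hm e').not_gt hlt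
  rw [Nat.card_eq_fintype_card (α := E)] at this
  exact Nat.le_sub_one_of_lt this

theorem natDegree_interiorPoly_le [Fintype E] [LT E] {r : V → E → Prop} {n : ℕ}
    (h : ∀ f, IsHypertree r f → intInact r f ≤ n) : (interiorPoly r).natDegree ≤ n := by
  refine Polynomial.natDegree_sum_le_of_forall_le _ _ fun i _ => ?_
  by_cases hi : i ≤ n
  · exact (Polynomial.natDegree_C_mul_X_pow_le _ _).trans hi
  · have : IsEmpty {f : E → ℕ // IsHypertree r f ∧ intInact r f = i} :=
      ⟨fun ⟨f, hf, hfi⟩ => hi (hfi ▸ h f hf)⟩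
    simp

theorem interiorPoly_degree_of_cut_general {V E : Type*} [Fintype V] [Fintype E] [LinearOrder E]
    (r : V → E → Prop) (e₁ e₂ : E) (hne : e₁ ≠ e₂) :
    (interiorPoly r).natDegree ≤
      min (Fintype.card E - 1)
        (Fintype.card V -
          Nat.card ((BipGraph r).induce
            {x | x ≠ Sum.inr e₁ ∧ x ≠ Sum.inr e₂}).ConnectedComponent + 1) :=
  natDegree_interiorPoly_le fun f hf =>
    le_min (intInact_le_card_sub_one r f) (hf.intInact_le hne)

/-- for a connected bipartite graph with a 2-vertex cut `{e₁, e₂} ⊆ E`,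
`deg I_G ≤ min (|E| - 1) (|V| - t + 1)` where `t` is the number of components of
`G - {e₁, e₂}`. -/
theorem interiorPoly_degree_of_cut {V E : Type*} [Fintype V] [Fintype E] [LinearOrder E]
    (r : V → E → Prop) (hconn : (BipGraph r).Connected) (e₁ e₂ : E) (hne : e₁ ≠ e₂)
    (hcut : ¬ ((BipGraph r).induce {x | x ≠ Sum.inr e₁ ∧ x ≠ Sum.inr e₂}).Connected) :
    (interiorPoly r).natDegree ≤
      min (Fintype.card E - 1)
        (Fintype.card V -
          Nat.card ((BipGraph r).induce
            {x | x ≠ Sum.inr e₁ ∧ x ≠ Sum.inr e₂}).ConnectedComponent + 1) :=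
  interiorPoly_degree_of_cut_general r e₁ e₂ hne
end
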